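/- The function ϱ on Ĩ × Ĩ defined by ϱ(α,β) = (1 + |s(α) − s(β)|)/3 if s(α) ≠ s(β) and ϱ(α,β) = |h(α) − h(β)|/3 if s(α) = s(β), is a metric on Ĩ: it takes values in [0,1], vanishes exactly on the diagonal, is symmetric, and satisfies the triangle inequality. -/
import Mathlib


/-- The set of intuitionistic fuzzy values Ĩ = {⟨μ,ν⟩ ∈ [0,1]² : μ + ν ≤ 1}. -/
def IFV : Set (ℝ × ℝ) :=
  {p | 0 ≤ p.1 ∧ p.1 ≤ 1 ∧ 0 ≤ p.2 ∧ p.2 ≤ 1 ∧ p.1 + p.2 ≤ 1}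

/-- Score function s(α) = μ_α − ν_α. -/
def sc (p : ℝ × ℝ) : ℝ := p.1 - p.2

/-- Accuracy function h(α) = μ_α + ν_α. -/
def ac (p : ℝ × ℝ) : ℝ := p.1 + p.2

/-- Strict Xu–Yager order. -/
def ltXY (a b : ℝ × ℝ) : Prop := sc a < sc b ∨ (sc a = sc b ∧ ac a < ac b)

/-- Nonstrict Xu–Yager order. -/
def leXY (a b : ℝ × ℝ) : Prop := sc a < sc b ∨ (sc a = sc b ∧ ac a ≤ ac b)

open Classical in
/-- The distance ϱ on Ĩ. -/
noncomputable def rho (a b : ℝ × ℝ) : ℝ :=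
  if sc a = sc b then |ac a - ac b| / 3 else (1 + |sc a - sc b|) / 3

/-- ϱ is a metric on Ĩ with values in [0,1]. -/
theorem rho_metric :
    (∀ a ∈ IFV, ∀ b ∈ IFV, rho a b ∈ Set.Icc (0 : ℝ) 1) ∧
    (∀ a ∈ IFV, ∀ b ∈ IFV, (rho a b = 0 ↔ a = b)) ∧
    (∀ a ∈ IFV, ∀ b ∈ IFV, rho a b = rho b a) ∧
    (∀ a ∈ IFV, ∀ b ∈ IFV, ∀ c ∈ IFV, rho a c ≤ rho a b + rho b c) := by
  refine ⟨?_, ?_, ?_, ?_⟩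
  · rintro a ⟨a1, a2, a3, a4, a5⟩ b ⟨b1, b2, b3, b4, b5⟩
    unfold rho sc ac
    constructor
    · split <;> positivity
    · split
      · rw [div_le_one (by norm_num)]
        rw [abs_le]; constructor <;> nlinarith
      · rw [div_le_one (by norm_num)]
        have : |a.1 - a.2 - (b.1 - b.2)| ≤ 2 := by
          rw [abs_le]; constructor <;> nlinarith
        linarith
  · rintro a ⟨a1, a2, a3, a4, a5⟩ b ⟨b1, b2, b3, b4, b5⟩
    unfold rho
    constructor
    · intro h
      split at h
      · rename_i hs
        have hac : ac a = ac b := by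
          have := abs_eq_zero.mp (by linarith [div_eq_zero_iff.mp h] : |ac a - ac b| = 0)
          linarith
        unfold sc at hs; unfold ac at hac
        have : a.1 = b.1 := by linarith
        have : a.2 = b.2 := by linarith
        exact Prod.ext ‹a.1 = b.1› ‹a.2 = b.2›
      · exfalso
        have := abs_nonneg (sc a - sc b)
        nlinarith
    · rintro rfl; simp
  · intro a _ b _
    unfold rho
    rcases eq_or_ne (sc a) (sc b) with h | h
    · rw [if_pos h, if_pos h.symm, abs_sub_comm]
    · rw [if_neg h, if_neg (Ne.symm h), abs_sub_comm]
  · rintro a ⟨a1, a2, a3, a4, a5⟩ b ⟨b1, b2, b3, b4, b5⟩ c ⟨c1, c2, c3, c4, c5⟩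
    unfold rho
    have habc : |ac a - ac c| ≤ |ac a - ac b| + |ac b - ac c| := abs_sub_le _ _ _
    have hsbc : |sc a - sc c| ≤ |sc a - sc b| + |sc b - sc c| := abs_sub_le _ _ _
    rcases eq_or_ne (sc a) (sc c) with hac | hac <;>
      rcases eq_or_ne (sc a) (sc b) with hab | hab
    · have hbc : sc b = sc c := hab ▸ hac
      rw [if_pos hac, if_pos hab, if_pos hbc]; linarith
    · have hbc : sc b ≠ sc c := fun h => hab (hac ▸ h.symm ▸ rfl)
      rw [if_pos hac, if_neg hab, if_neg hbc]
      have h1 : |ac a - ac c| ≤ 1 := by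
        unfold ac; rw [abs_le]; constructor <;> nlinarith
      have h2 := abs_nonneg (sc a - sc b)
      have h3 := abs_nonneg (sc b - sc c)
      linarith
    · have hbc : sc b ≠ sc c := fun h => hac (hab.trans h)
      rw [if_neg hac, if_pos hab, if_neg hbc]
      have : sc a - sc c = sc b - sc c := by rw [hab]
      rw [this] at *
      have := abs_nonneg (ac a - ac b)
      linarith
    · rcases eq_or_ne (sc b) (sc c) with hbc | hbc
      · rw [if_neg hac, if_neg hab, if_pos hbc]
        have : sc a - sc c = sc a - sc b := by rw [hbc]
        rw [this] at *
        have := abs_nonneg (ac b - ac c)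
        linarith
      · rw [if_neg hac, if_neg hab, if_neg hbc]
        linarith
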